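/- arXiv:2311.07837 — 3 statements merged into one kernel-verified Lean document; each statement's English description precedes it below -/
import Mathlib

section
/- Let N be a positive integer, D a negative integer with D ≡ 0 or 1 (mod 4), and Γ a subgroup of SL₂(ℤ) containing Γ₁(N). Suppose that for every form Q ∈ 𝒬(D,N) and every γ ∈ Γ, the form Q^γ again belongs to 𝒬(D,N). Then for every prime p dividing N such that (if p is odd) the Legendre symbol (D/p) ≠ −1, or (if p = 2) D ≢ 5 (mod 8), and for every matrix [[q,r],[s,t]] ∈ Γ, one has p ∣ s; that is, Γ is contained in Γ₀(M_{D,N}). -/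
open Matrix CongruenceSubgroup
open scoped MatrixGroups

/-- `ax² + bxy + cy²` belongs to `𝒬(D, N)`: primitive, positive definite of
discriminant `D`, with leading coefficient prime to `N`. -/
def IsFormClassForm (D : ℤ) (N : ℕ) (a b c : ℤ) : Prop :=
  Int.gcd a (Int.gcd b c : ℤ) = 1 ∧ b ^ 2 - 4 * a * c = D ∧ 0 < a ∧ Int.gcd a (N : ℤ) = 1

/-- The Kronecker symbol `(D/p)` is different from `-1`: for odd primes `p` this says the
Legendre symbol `(D/p) ≠ -1`, and for `p = 2` it says `D ≢ 5 (mod 8)`. -/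
def KronSymNeNegOne (D : ℤ) (p : ℕ) : Prop :=
  if p = 2 then ¬ D ≡ 5 [ZMOD 8] else ∀ _ : Fact p.Prime, legendreSym p D ≠ -1

/-!
If `p ∣ N` and `(D/p) ≠ -1`, then `D` is a square modulo `4p`, so there is a form
`x² + bxy + cy²` in `𝒬(D, N)` with `p ∣ c`. If some `γ ∈ Γ` had `p ∤ γ₁₀`, then replacing
`γ` by `Tⁿ γ` (still in `Γ`, since `Tⁿ ∈ Γ₁(N)`) makes `p ∣ γ₀₀`; the transformed form then has
leading coefficient `γ₀₀² + b γ₀₀ γ₁₀ + c γ₁₀² ≡ 0 (mod p)`, contradicting `gcd(a, N) = 1`.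
-/

lemma four_dvd_sq_sub_of_two_dvd_sub {D b : ℤ} (hD4 : D % 4 = 0 ∨ D % 4 = 1)
    (hb : 2 ∣ b - D) : 4 ∣ b ^ 2 - D := by
  obtain ⟨k, hk⟩ := hb
  have hDD : 4 ∣ D * (D - 1) := by
    rcases hD4 with h | h
    · exact (Int.dvd_of_emod_eq_zero h).mul_right _
    · exact (Int.dvd_of_emod_eq_zero (by omega : (D - 1) % 4 = 0)).mul_left _
  have : b ^ 2 - D = 4 * (k * (k + D)) + D * (D - 1) := by
    rw [show b = D + 2 * k by omega]; ring
  rw [this]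
  exact dvd_add (dvd_mul_right _ _) hDD

lemma exists_dvd_sq_sub_of_legendreSym_ne_neg_one {p : ℕ} [Fact p.Prime] {D : ℤ}
    (h : legendreSym p D ≠ -1) : ∃ x : ℤ, (p : ℤ) ∣ x ^ 2 - D := by
  obtain ⟨y, hy⟩ : IsSquare (D : ZMod p) := not_not.mp (mt (legendreSym.eq_neg_one_iff p).mpr h)
  refine ⟨y.cast, (ZMod.intCast_zmod_eq_zero_iff_dvd _ _).mp ?_⟩
  push_cast [ZMod.intCast_zmod_cast, hy]
  ring

lemma exists_four_mul_dvd_sq_sub {D : ℤ} (hD4 : D % 4 = 0 ∨ D % 4 = 1) {p : ℕ}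
    (hp : p.Prime) (hK : KronSymNeNegOne D p) : ∃ b : ℤ, 4 * (p : ℤ) ∣ b ^ 2 - D := by
  by_cases hp2 : p = 2
  · subst hp2
    simp only [KronSymNeNegOne, if_true, Int.ModEq] at hK
    have h8 : D % 8 = 0 ∨ D % 8 = 1 ∨ D % 8 = 4 := by omega
    rcases h8 with h | h | h
    exacts [⟨0, by omega⟩, ⟨1, by omega⟩, ⟨2, by omega⟩]
  · have : Fact p.Prime := ⟨hp⟩
    simp only [KronSymNeNegOne, if_neg hp2] at hK
    obtain ⟨x, hx⟩ := exists_dvd_sq_sub_of_legendreSym_ne_neg_one (hK ⟨hp⟩)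
    have hodd : Odd p := hp.odd_of_ne_two hp2
    -- `b ≡ x (mod p)` and `b - D = (1 + p)(x - D)` is even.
    set b := x + p * (x - D)
    have hbp : (p : ℤ) ∣ b ^ 2 - D := by
      have : b ^ 2 - D = (x ^ 2 - D) + p * ((x - D) * (2 * x + p * (x - D))) := by ring
      rw [this]
      exact dvd_add hx (dvd_mul_right _ _)
    have hb2 : 2 ∣ b - D := by
      have : b - D = (1 + p) * (x - D) := by ring
      rw [this]
      obtain ⟨m, hm⟩ := hodd
      exact dvd_mul_of_dvd_left ⟨(m : ℤ) + 1, by rw [hm]; push_cast; ring⟩ _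
    have hcop : IsCoprime (4 : ℤ) p := by
      rw [Int.isCoprime_iff_gcd_eq_one]
      exact Nat.Coprime.pow_left 2 (Nat.coprime_two_left.mpr hodd)
    exact ⟨b, hcop.mul_dvd (four_dvd_sq_sub_of_two_dvd_sub hD4 hb2) hbp⟩

lemma isFormClassForm_one {D b c : ℤ} (N : ℕ) (h : b ^ 2 - 4 * c = D) :
    IsFormClassForm D N 1 b c :=
  ⟨by simp, by linarith, one_pos, by simp⟩

lemma IsCoprime.exists_dvd_add_mul {R : Type*} [CommRing R] {p s : R} (h : IsCoprime p s)
    (q : R) : ∃ n, p ∣ q + n * s := by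
  obtain ⟨u, v, huv⟩ := h
  exact ⟨-(q * v), ⟨q * u, by linear_combination -q * huv⟩⟩

lemma ModularGroup.T_zpow_mem_Gamma1 (N : ℕ) (n : ℤ) : ModularGroup.T ^ n ∈ Gamma1 N := by
  simp [Gamma1_mem, ModularGroup.coe_T_zpow]

lemma ModularGroup.T_zpow_mul_apply_zero_zero (n : ℤ) (g : SL(2, ℤ)) :
    (ModularGroup.T ^ n * g) 0 0 = g 0 0 + n * g 1 0 := by
  simp [ModularGroup.coe_T_zpow, Matrix.mul_apply, Fin.sum_univ_two]

lemma ModularGroup.T_zpow_mul_apply_one_zero (n : ℤ) (g : SL(2, ℤ)) :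
    (ModularGroup.T ^ n * g) 1 0 = g 1 0 :=
  congrFun (ModularGroup.T_pow_mul_apply_one n g) 0

theorem le_Gamma0_of_acts_on_forms_general (N : ℕ)
    (D : ℤ) (hD4 : D % 4 = 0 ∨ D % 4 = 1)
    (Γ : Subgroup SL(2, ℤ)) (hΓ : Gamma1 N ≤ Γ)
    (hact : ∀ a b c : ℤ, IsFormClassForm D N a b c → ∀ γ ∈ Γ,
      IsFormClassForm D N
        (a * (γ 0 0) ^ 2 + b * (γ 0 0) * (γ 1 0) + c * (γ 1 0) ^ 2)
        (2 * a * (γ 0 0) * (γ 0 1) + b * ((γ 0 0) * (γ 1 1) + (γ 0 1) * (γ 1 0))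
          + 2 * c * (γ 1 0) * (γ 1 1))
        (a * (γ 0 1) ^ 2 + b * (γ 0 1) * (γ 1 1) + c * (γ 1 1) ^ 2)) :
    ∀ γ ∈ Γ, ∀ p : ℕ, p.Prime → p ∣ N → KronSymNeNegOne D p → (p : ℤ) ∣ γ 1 0 := by
  intro γ hγ p hp hpN hK
  by_contra hps
  obtain ⟨b, k, hk⟩ := exists_four_mul_dvd_sq_sub hD4 hp hK
  have hform : IsFormClassForm D N 1 b (p * k) := isFormClassForm_one N (by linarith)
  obtain ⟨n, hn⟩ :=
    ((Nat.prime_iff_prime_int.mp hp).coprime_iff_not_dvd.mpr hps).exists_dvd_add_mul (γ 0 0)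
  have hmem : ModularGroup.T ^ n * γ ∈ Γ :=
    Γ.mul_mem (hΓ (ModularGroup.T_zpow_mem_Gamma1 N n)) hγ
  obtain ⟨-, -, -, hgcd⟩ := hact 1 b (p * k) hform _ hmem
  rw [ModularGroup.T_zpow_mul_apply_zero_zero, ModularGroup.T_zpow_mul_apply_one_zero] at hgcd
  have hpa : (p : ℤ) ∣ 1 * (γ 0 0 + n * γ 1 0) ^ 2 + b * (γ 0 0 + n * γ 1 0) * γ 1 0
      + p * k * γ 1 0 ^ 2 := by
    obtain ⟨m, hm⟩ := hn
    exact ⟨m * (p * m + b * γ 1 0) + k * γ 1 0 ^ 2, by rw [hm]; ring⟩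
  exact hp.not_dvd_one (hgcd ▸ Int.dvd_gcd hpa (Int.natCast_dvd_natCast.mpr hpN))

/-- If `Γ ⊇ Γ₁(N)` acts on `𝒬(D, N)`, i.e. `Q^γ ∈ 𝒬(D, N)` for all `Q ∈ 𝒬(D, N)` and
`γ = [[q,r],[s,t]] ∈ Γ`, then `Γ ⊆ Γ₀(M_{D,N})`: every prime `p ∣ N` with Kronecker
symbol `(D/p) ≠ -1` divides the lower-left entry `s` of every element of `Γ`. -/
theorem le_Gamma0_of_acts_on_forms (N : ℕ) (hN : 0 < N)
    (D : ℤ) (hD : D < 0) (hD4 : D % 4 = 0 ∨ D % 4 = 1)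
    (Γ : Subgroup SL(2, ℤ)) (hΓ : Gamma1 N ≤ Γ)
    (hact : ∀ a b c : ℤ, IsFormClassForm D N a b c → ∀ γ ∈ Γ,
      IsFormClassForm D N
        (a * (γ 0 0) ^ 2 + b * (γ 0 0) * (γ 1 0) + c * (γ 1 0) ^ 2)
        (2 * a * (γ 0 0) * (γ 0 1) + b * ((γ 0 0) * (γ 1 1) + (γ 0 1) * (γ 1 0))
          + 2 * c * (γ 1 0) * (γ 1 1))
        (a * (γ 0 1) ^ 2 + b * (γ 0 1) * (γ 1 1) + c * (γ 1 1) ^ 2)) :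
    ∀ γ ∈ Γ, ∀ p : ℕ, p.Prime → p ∣ N → KronSymNeNegOne D p → (p : ℤ) ∣ γ 1 0 :=
  le_Gamma0_of_acts_on_forms_general N D hD4 Γ hΓ hact
end

section
/- Let N be a positive integer, D a negative integer with D ≡ 0 or 1 (mod 4), and Γ a subgroup of SL₂(ℤ) containing Γ₁(N). Suppose that for every matrix [[q,r],[s,t]] ∈ Γ and every prime p dividing N with (if p odd) the Legendre symbol (D/p) ≠ −1, or (if p = 2) D ≢ 5 (mod 8), one has p ∣ s (i.e., Γ ⊆ Γ₀(M_{D,N})). Then for every form Q ∈ 𝒬(D,N) and every γ ∈ Γ, the form Q^γ again belongs to 𝒬(D,N). -/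
open Matrix CongruenceSubgroup
open scoped MatrixGroups

/-!
`Q^γ` is primitive of discriminant `D` because `γ` is invertible over `ℤ`, and positive definite
because its leading coefficient `A = Q(q, s)` is a value of `Q` at a nonzero vector. For
`gcd(A, N) = 1`, let a prime `p ∣ N` divide `A`. Then `p ∣ s`: by hypothesis when `(D/p) ≠ -1`;
for odd `p` with `(D/p) = -1` because `4aA = (2aq + bs)² - Ds²` would otherwise make `D` a square
mod `p`; and for `p = 2`, `D ≡ 5 (mod 8)` because then `a, b, c` are odd, so
`Q(x, y) ≡ x² + xy + y² (mod 2)` is odd unless `x` and `y` are even. Now `p ∣ A ≡ aq² (mod p)`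
with `p ∤ a` gives `p ∣ q`, contradicting `gcd(q, s) = 1`.
-/

/-- `Q^γ` on coefficient triples: `(a, b, c)` stands for `ax² + bxy + cy²`. -/
def formAct (f : ℤ × ℤ × ℤ) (γ : SL(2, ℤ)) : ℤ × ℤ × ℤ :=
  (f.1 * γ 0 0 ^ 2 + f.2.1 * γ 0 0 * γ 1 0 + f.2.2 * γ 1 0 ^ 2,
    2 * f.1 * γ 0 0 * γ 0 1 + f.2.1 * (γ 0 0 * γ 1 1 + γ 0 1 * γ 1 0) + 2 * f.2.2 * γ 1 0 * γ 1 1,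
    f.1 * γ 0 1 ^ 2 + f.2.1 * γ 0 1 * γ 1 1 + f.2.2 * γ 1 1 ^ 2)

lemma formAct_one (f : ℤ × ℤ × ℤ) : formAct f 1 = f := by
  simp [formAct]

lemma formAct_mul (f : ℤ × ℤ × ℤ) (γ δ : SL(2, ℤ)) :
    formAct (formAct f γ) δ = formAct f (γ * δ) := by
  ext <;> simp only [formAct, Matrix.SpecialLinearGroup.coe_mul, Matrix.mul_apply,
    Fin.sum_univ_two] <;> ring

lemma formAct_formAct_inv (f : ℤ × ℤ × ℤ) (γ : SL(2, ℤ)) : formAct (formAct f γ) γ⁻¹ = f := by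
  rw [formAct_mul, mul_inv_cancel, formAct_one]

lemma formAct_smul (d : ℤ) (f : ℤ × ℤ × ℤ) (γ : SL(2, ℤ)) :
    formAct (d • f) γ = d • formAct f γ := by
  ext <;> simp only [formAct, Prod.smul_fst, Prod.smul_snd, smul_eq_mul] <;> ring

lemma dvd_formAct {d : ℤ} {f : ℤ × ℤ × ℤ} (h₁ : d ∣ f.1) (h₂ : d ∣ f.2.1) (h₃ : d ∣ f.2.2)
    (γ : SL(2, ℤ)) : d ∣ (formAct f γ).1 ∧ d ∣ (formAct f γ).2.1 ∧ d ∣ (formAct f γ).2.2 := by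
  obtain ⟨a, ha⟩ := h₁
  obtain ⟨b, hb⟩ := h₂
  obtain ⟨c, hc⟩ := h₃
  have hf : f = d • (a, b, c) := Prod.ext ha (Prod.ext hb hc)
  rw [hf, formAct_smul]
  exact ⟨dvd_mul_right _ _, dvd_mul_right _ _, dvd_mul_right _ _⟩

lemma gcd_formAct_eq_one {f : ℤ × ℤ × ℤ} (hf : Int.gcd f.1 (Int.gcd f.2.1 f.2.2 : ℤ) = 1)
    (γ : SL(2, ℤ)) :
    Int.gcd (formAct f γ).1 (Int.gcd (formAct f γ).2.1 (formAct f γ).2.2 : ℤ) = 1 := by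
  set g : ℤ := (Int.gcd (formAct f γ).1 (Int.gcd (formAct f γ).2.1 (formAct f γ).2.2 : ℤ) : ℤ)
  have hg₂₃ : g ∣ _ := Int.gcd_dvd_right (formAct f γ).1 _
  obtain ⟨h₁, h₂, h₃⟩ := formAct_formAct_inv f γ ▸ dvd_formAct (Int.gcd_dvd_left _ _)
    (hg₂₃.trans (Int.gcd_dvd_left _ _)) (hg₂₃.trans (Int.gcd_dvd_right _ _)) γ⁻¹
  have hg : g ∣ _ := Int.dvd_coe_gcd h₁ (Int.dvd_coe_gcd h₂ h₃)
  rw [hf] at hg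
  exact Nat.dvd_one.mp (Int.natCast_dvd_natCast.mp hg)

lemma discr_formAct (f : ℤ × ℤ × ℤ) (γ : SL(2, ℤ)) :
    (formAct f γ).2.1 ^ 2 - 4 * (formAct f γ).1 * (formAct f γ).2.2
      = f.2.1 ^ 2 - 4 * f.1 * f.2.2 := by
  have hdet : γ 0 0 * γ 1 1 - γ 0 1 * γ 1 0 = 1 := by
    rw [← Matrix.det_fin_two]
    exact γ.det_coe
  simp only [formAct]
  linear_combination
    (f.2.1 ^ 2 - 4 * f.1 * f.2.2) * (γ 0 0 * γ 1 1 - γ 0 1 * γ 1 0 + 1) * hdet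

lemma form_pos_of_discr_neg {a b c x y : ℤ} (hD : b ^ 2 - 4 * a * c < 0) (ha : 0 < a)
    (hxy : x ≠ 0 ∨ y ≠ 0) : 0 < a * x ^ 2 + b * x * y + c * y ^ 2 := by
  rcases eq_or_ne y 0 with rfl | hy
  · have hx : x ≠ 0 := by simpa using hxy
    simpa using mul_pos ha (by positivity : 0 < x ^ 2)
  · have h4a : 4 * a * (a * x ^ 2 + b * x * y + c * y ^ 2)
        = (2 * a * x + b * y) ^ 2 - (b ^ 2 - 4 * a * c) * y ^ 2 := by ring
    have hy2 : 0 < y ^ 2 := by positivity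
    have : 0 < 4 * a * (a * x ^ 2 + b * x * y + c * y ^ 2) := by
      rw [h4a]; nlinarith [sq_nonneg (2 * a * x + b * y)]
    exact pos_of_mul_pos_right this (by positivity)

lemma Prime.not_dvd_form {R : Type*} [CommRing R] {p a b c x y : R} (hp : Prime p)
    (ha : ¬p ∣ a) (hxy : IsCoprime x y) (hy : p ∣ y) : ¬p ∣ a * x ^ 2 + b * x * y + c * y ^ 2 := by
  intro h
  have hax : p ∣ a * x ^ 2 := by
    rw [show a * x ^ 2 = a * x ^ 2 + b * x * y + c * y ^ 2 - (b * x + c * y) * y by ring]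
    exact dvd_sub h (dvd_mul_of_dvd_right hy _)
  rcases hp.dvd_or_dvd hax with hpa | hpx
  · exact ha hpa
  · exact hp.not_isUnit (hxy.isUnit_of_dvd' (hp.dvd_of_dvd_pow hpx) hy)

lemma dvd_of_legendreSym_eq_neg_one {p : ℕ} [Fact p.Prime] {a b c x y : ℤ}
    (hD : legendreSym p (b ^ 2 - 4 * a * c) = -1) (h : (p : ℤ) ∣ a * x ^ 2 + b * x * y + c * y ^ 2) :
    (p : ℤ) ∣ y := by
  rw [← ZMod.intCast_zmod_eq_zero_iff_dvd] at h ⊢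
  push_cast at h
  by_contra hy
  -- `4a·Q(x, y) = (2ax + by)² - Dy²`, so `D` would be a square mod `p`
  refine (legendreSym.eq_neg_one_iff p).mp hD ⟨(2 * a * x + b * y) / y, ?_⟩
  field_simp
  push_cast
  linear_combination (-4 * (a : ZMod p)) * h

lemma odd_of_discr_modEq_five {a b c : ℤ} (hD : b ^ 2 - 4 * a * c ≡ 5 [ZMOD 8]) :
    Odd a ∧ Odd b ∧ Odd c := by
  unfold Int.ModEq at hD
  obtain ⟨k, rfl⟩ : Odd b := by
    rcases Int.even_or_odd b with ⟨k, rfl⟩ | hb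
    · rw [show (k + k) ^ 2 - 4 * a * c = 4 * (k ^ 2 - a * c) by ring] at hD
      omega
    · exact hb
  obtain ⟨m, hm⟩ := Int.even_mul_succ_self k
  have hac : Odd (a * c) := by
    rw [show (2 * k + 1) ^ 2 - 4 * a * c = 8 * m + 1 - 4 * (a * c) by linear_combination 4 * hm]
      at hD
    rw [Int.odd_iff]
    omega
  exact ⟨(Int.odd_mul.mp hac).1, odd_two_mul_add_one k, (Int.odd_mul.mp hac).2⟩

lemma two_dvd_of_discr_modEq_five {a b c x y : ℤ} (hD : b ^ 2 - 4 * a * c ≡ 5 [ZMOD 8])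
    (h : 2 ∣ a * x ^ 2 + b * x * y + c * y ^ 2) : 2 ∣ y := by
  obtain ⟨ha, hb, hc⟩ := odd_of_discr_modEq_five hD
  have hmod2 : ∀ u v : ZMod 2, u ^ 2 + u * v + v ^ 2 = 0 → v = 0 := by decide
  rw [← even_iff_two_dvd, ← ZMod.intCast_eq_zero_iff_even] at h ⊢
  push_cast at h
  rw [ha.intCast_zmod_two, hb.intCast_zmod_two, hc.intCast_zmod_two] at h
  exact hmod2 _ _ (by simpa using h)

lemma dvd_of_not_kronSymNeNegOne {p : ℕ} (hp : p.Prime) {a b c x y : ℤ}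
    (hk : ¬KronSymNeNegOne (b ^ 2 - 4 * a * c) p)
    (h : (p : ℤ) ∣ a * x ^ 2 + b * x * y + c * y ^ 2) : (p : ℤ) ∣ y := by
  unfold KronSymNeNegOne at hk
  split_ifs at hk with hp2
  · subst hp2
    exact two_dvd_of_discr_modEq_five (not_not.mp hk) h
  · push Not at hk
    obtain ⟨_, hleg⟩ := hk
    exact dvd_of_legendreSym_eq_neg_one hleg h

lemma gcd_form_eq_one {N : ℕ} {a b c x y : ℤ} (haN : Int.gcd a N = 1) (hxy : IsCoprime x y)
    (hy : ∀ p : ℕ, p.Prime → p ∣ N → KronSymNeNegOne (b ^ 2 - 4 * a * c) p → (p : ℤ) ∣ y) :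
    Int.gcd (a * x ^ 2 + b * x * y + c * y ^ 2) N = 1 := by
  refine Nat.coprime_of_dvd fun p hp hpQ hpN ↦ ?_
  rw [Int.natAbs_natCast] at hpN
  have hpa : ¬(p : ℤ) ∣ a := fun hpa ↦
    hp.not_dvd_one (haN ▸ Nat.dvd_gcd (Int.natCast_dvd.mp hpa) (by simpa using hpN))
  have hpy : (p : ℤ) ∣ y := by
    by_cases hk : KronSymNeNegOne (b ^ 2 - 4 * a * c) p
    · exact hy p hp hpN hk
    · exact dvd_of_not_kronSymNeNegOne hp hk (Int.natCast_dvd.mpr hpQ)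
  exact (Nat.prime_iff_prime_int.mp hp).not_dvd_form hpa hxy hpy (Int.natCast_dvd.mpr hpQ)

theorem acts_on_forms_of_le_Gamma0_general (N : ℕ)
    (D : ℤ) (hD : D < 0)
    (Γ : Subgroup SL(2, ℤ))
    (hle : ∀ γ ∈ Γ, ∀ p : ℕ, p.Prime → p ∣ N → KronSymNeNegOne D p → (p : ℤ) ∣ γ 1 0) :
    ∀ a b c : ℤ, IsFormClassForm D N a b c → ∀ γ ∈ Γ,
      IsFormClassForm D N
        (a * (γ 0 0) ^ 2 + b * (γ 0 0) * (γ 1 0) + c * (γ 1 0) ^ 2)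
        (2 * a * (γ 0 0) * (γ 0 1) + b * ((γ 0 0) * (γ 1 1) + (γ 0 1) * (γ 1 0))
          + 2 * c * (γ 1 0) * (γ 1 1))
        (a * (γ 0 1) ^ 2 + b * (γ 0 1) * (γ 1 1) + c * (γ 1 1) ^ 2) := by
  rintro a b c ⟨hprim, rfl, ha, haN⟩ γ hγ
  have hcol : IsCoprime (γ 0 0) (γ 1 0) := Matrix.SpecialLinearGroup.isCoprime_col γ 0
  have hcol_ne : γ 0 0 ≠ 0 ∨ γ 1 0 ≠ 0 := by
    by_contra! h
    exact not_isCoprime_zero_zero (h.1 ▸ h.2 ▸ hcol)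
  exact ⟨gcd_formAct_eq_one (f := (a, b, c)) hprim γ, discr_formAct (a, b, c) γ,
    form_pos_of_discr_neg hD ha hcol_ne, gcd_form_eq_one haN hcol (hle γ hγ)⟩

/-- If `Γ ⊇ Γ₁(N)` is contained in `Γ₀(M_{D,N})`, i.e. every prime `p ∣ N` with Kronecker
symbol `(D/p) ≠ -1` divides the lower-left entry of every `γ ∈ Γ`, then `Γ` acts on
`𝒬(D, N)`: `Q^γ ∈ 𝒬(D, N)` for all `Q ∈ 𝒬(D, N)` and `γ = [[q,r],[s,t]] ∈ Γ`. -/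
theorem acts_on_forms_of_le_Gamma0 (N : ℕ) (hN : 0 < N)
    (D : ℤ) (hD : D < 0) (hD4 : D % 4 = 0 ∨ D % 4 = 1)
    (Γ : Subgroup SL(2, ℤ)) (hΓ : Gamma1 N ≤ Γ)
    (hle : ∀ γ ∈ Γ, ∀ p : ℕ, p.Prime → p ∣ N → KronSymNeNegOne D p → (p : ℤ) ∣ γ 1 0) :
    ∀ a b c : ℤ, IsFormClassForm D N a b c → ∀ γ ∈ Γ,
      IsFormClassForm D N
        (a * (γ 0 0) ^ 2 + b * (γ 0 0) * (γ 1 0) + c * (γ 1 0) ^ 2)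
        (2 * a * (γ 0 0) * (γ 0 1) + b * ((γ 0 0) * (γ 1 1) + (γ 0 1) * (γ 1 0))
          + 2 * c * (γ 1 0) * (γ 1 1))
        (a * (γ 0 1) ^ 2 + b * (γ 0 1) * (γ 1 1) + c * (γ 1 1) ^ 2) :=
  acts_on_forms_of_le_Gamma0_general N D hD Γ hle
end

section
/- Let N be a positive integer such that −1 is a quadratic residue modulo N, i.e., there exists an integer t with t² ≡ −1 (mod N). Let ζ ∈ ℂ be a primitive N-th root of unity and let D be a negative integer. Then no element x of the subfield ℚ(ζ) of ℂ satisfies x² = D. Equivalently, the N-th cyclotomic field contains no imaginary quadratic field. -/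
/-!
Pick `u ∈ (ℤ/Nℤ)ˣ` with `u² = -1` and let `σ` be the automorphism of `ℚ(ζ)` with `σ ζ = ζᵘ`.
Then `σ²` sends `ζ` to `ζ⁻¹ = conj ζ`, so `σ²` is complex conjugation on `ℚ(ζ)`. If `x² = D`
is rational then `σ x = ±x`, hence `σ² x = x`: so `x` is real and `x² = D < 0` is impossible.
-/

open IntermediateField ComplexConjugate

theorem ZMod.exists_unit_sq_eq_neg_one {n : ℕ} (h : ∃ t : ℤ, t ^ 2 ≡ -1 [ZMOD n]) :
    ∃ u : (ZMod n)ˣ, u ^ 2 = -1 := by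
  obtain ⟨t, ht⟩ := h
  have hsq : (t : ZMod n) ^ 2 = -1 := by
    exact_mod_cast (ZMod.intCast_eq_intCast_iff _ _ n).mpr ht
  have hunit : IsUnit (t : ZMod n) :=
    IsUnit.of_mul_eq_one (-(t : ZMod n)) (by linear_combination -hsq)
  exact ⟨hunit.unit, Units.ext (by simpa using hsq)⟩

theorem pow_val_neg_one_eq_inv {M : Type*} [DivisionMonoid M] {n : ℕ} [NeZero n] {x : M}
    (hx : x ^ n = 1) :
    x ^ (-1 : ZMod n).val = x⁻¹ := by
  refine eq_inv_of_mul_eq_one_left ?_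
  obtain ⟨k, hk⟩ : n ∣ (-1 : ZMod n).val + 1 := by
    rw [← ZMod.natCast_eq_zero_iff]; simp
  rw [← pow_succ, hk, pow_mul, hx, one_pow]

theorem AlgEquiv.apply_apply_eq_self_of_sq_eq_algebraMap {R A : Type*} [CommSemiring R]
    [CommRing A] [NoZeroDivisors A] [Algebra R A] (σ : A ≃ₐ[R] A) {x : A} {r : R}
    (hx : x ^ 2 = algebraMap R A r) : σ (σ x) = x := by
  have hσx : σ x ^ 2 = x ^ 2 := by rw [← map_pow, hx, AlgEquiv.commutes]
  rcases sq_eq_sq_iff_eq_or_eq_neg.mp hσx with h | h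
  · rw [h, h]
  · rw [h, map_neg, h, neg_neg]

theorem IsPrimitiveRoot.isCyclotomicExtension_adjoin {F L : Type*} [Field F] [Field L]
    [Algebra F L] {n : ℕ} [NeZero n] {ζ : L} (hζ : IsPrimitiveRoot ζ n) :
    IsCyclotomicExtension {n} F F⟮ζ⟯ := by
  have hint : IsIntegral F ζ := (hζ.isIntegral (NeZero.pos n)).tower_top
  change IsCyclotomicExtension {n} F F⟮ζ⟯.toSubalgebra
  rw [adjoin_simple_toSubalgebra_of_isAlgebraic hint.isAlgebraic]
  exact hζ.adjoin_isCyclotomicExtension F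

theorem IsCyclotomicExtension.Rat.exists_apply_apply_eq_inv (n : ℕ) [NeZero n] (K : Type*)
    [Field K] [NumberField K] [IsCyclotomicExtension {n} ℚ K]
    (h : ∃ t : ℤ, t ^ 2 ≡ -1 [ZMOD n]) :
    ∃ σ : Gal(K/ℚ), ∀ x : K, x ^ n = 1 → σ (σ x) = x⁻¹ := by
  obtain ⟨u, hu⟩ := ZMod.exists_unit_sq_eq_neg_one h
  refine ⟨(galEquivZMod n K).symm u, fun x hx => ?_⟩
  rw [← AlgEquiv.mul_apply, galEquivZMod_apply_of_pow_eq n K _ hx, map_mul,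
    MulEquiv.apply_symm_apply, ← sq, hu, Units.val_neg, Units.val_one,
    pow_val_neg_one_eq_inv hx]

theorem Complex.conj_eq_apply_of_apply_gen_eq_inv {z : ℂ} (hz : ‖z‖ = 1) (τ : Gal(ℚ⟮z⟯/ℚ))
    (hτ : τ (AdjoinSimple.gen ℚ z) = (AdjoinSimple.gen ℚ z)⁻¹) (x : ℚ⟮z⟯) :
    conj (x : ℂ) = τ x := by
  have hext : (Complex.conjAe.restrictScalars ℚ).toAlgHom.comp ℚ⟮z⟯.val =
      ℚ⟮z⟯.val.comp τ.toAlgHom := by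
    refine adjoin_algHom_ext ℚ fun y hy => ?_
    rw [Set.mem_singleton_iff] at hy
    subst y
    change conj z = ((τ (AdjoinSimple.gen ℚ z) : ℚ⟮z⟯) : ℂ)
    rw [hτ, ← Complex.inv_eq_conj hz]
    simp
  exact DFunLike.congr_fun hext x

/-- **Remark 2.3 (ii).** If `-1` is a quadratic residue modulo `N`, then the `N`-th
cyclotomic field `ℚ(ζ_N)` contains no square root of a negative integer `D`; in other
words, it contains no imaginary quadratic field. -/
theorem cyclotomic_no_imaginary_quadratic (N : ℕ) (hN : 0 < N)
    (ht : ∃ t : ℤ, t ^ 2 ≡ -1 [ZMOD (N : ℤ)])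
    (ζ : ℂ) (hζ : IsPrimitiveRoot ζ N) (D : ℤ) (hD : D < 0) :
    ∀ x ∈ IntermediateField.adjoin ℚ {ζ}, x ^ 2 ≠ (D : ℂ) := by
  intro x hx hx2
  have : NeZero N := ⟨hN.ne'⟩
  have : IsCyclotomicExtension {N} ℚ ℚ⟮ζ⟯ := hζ.isCyclotomicExtension_adjoin
  have := IsCyclotomicExtension.numberField {N} ℚ ℚ⟮ζ⟯
  obtain ⟨σ, hσ⟩ := IsCyclotomicExtension.Rat.exists_apply_apply_eq_inv N ℚ⟮ζ⟯ ht
  have hσx : σ (σ ⟨x, hx⟩) = ⟨x, hx⟩ :=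
    σ.apply_apply_eq_self_of_sq_eq_algebraMap (r := (D : ℚ)) (Subtype.ext (by simpa using hx2))
  have hx_real : conj x = x := by
    have hgen := hσ (AdjoinSimple.gen ℚ ζ) (Subtype.ext (by simpa using hζ.pow_eq_one))
    have hconj := Complex.conj_eq_apply_of_apply_gen_eq_inv (hζ.norm'_eq_one hN.ne') (σ * σ)
      hgen ⟨x, hx⟩
    rwa [AlgEquiv.mul_apply, hσx] at hconj
  obtain ⟨r, rfl⟩ := Complex.conj_eq_iff_real.mp hx_real
  have hr : r ^ 2 = D := by exact_mod_cast hx2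
  have hDr : (D : ℝ) < 0 := by exact_mod_cast hD
  nlinarith [sq_nonneg r]
end
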